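/- If φ ∈ H and a > 0 satisfy ‖φ‖ ≤ a·‖Tφ‖, then for every k of the form k = 2^l, l = 0, 1, 2, ..., one has ‖φ‖ ≤ a^k·‖T^k φ‖. -/

import Mathlib

/-! Self-adjointness gives `‖S x‖² = re ⟪S (S x), x⟫ ≤ ‖S² x‖ ‖x‖`, so a lower bound
`‖x‖ ≤ c ‖S x‖` squares to `‖x‖ ≤ c² ‖S² x‖`. Applying this to `S = T ^ 2 ^ l` doubles the
exponent at each step. -/

namespace LinearMap.IsSymmetric

variable {𝕜 E : Type*} [RCLike 𝕜] [NormedAddCommGroup E] [InnerProductSpace 𝕜 E]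
  {S : E →ₗ[𝕜] E}

theorem norm_apply_sq_le (hS : S.IsSymmetric) (x : E) :
    ‖S x‖ ^ 2 ≤ ‖S (S x)‖ * ‖x‖ :=
  calc ‖S x‖ ^ 2 = RCLike.re (inner 𝕜 (S (S x)) x) := by
        rw [hS, ← inner_self_eq_norm_sq (𝕜 := 𝕜)]
    _ ≤ ‖inner 𝕜 (S (S x)) x‖ := RCLike.re_le_norm _
    _ ≤ ‖S (S x)‖ * ‖x‖ := norm_inner_le_norm _ _

theorem norm_le_sq_mul_norm_apply_apply (hS : S.IsSymmetric) {x : E} {c : ℝ}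
    (hx : ‖x‖ ≤ c * ‖S x‖) : ‖x‖ ≤ c ^ 2 * ‖S (S x)‖ := by
  rcases eq_or_ne x 0 with rfl | hx0
  · simp
  have hsq : ‖x‖ * ‖x‖ ≤ c ^ 2 * ‖S (S x)‖ * ‖x‖ :=
    calc ‖x‖ * ‖x‖ = ‖x‖ ^ 2 := (sq _).symm
      _ ≤ (c * ‖S x‖) ^ 2 := pow_le_pow_left₀ (norm_nonneg x) hx 2
      _ = c ^ 2 * ‖S x‖ ^ 2 := mul_pow _ _ _
      _ ≤ c ^ 2 * (‖S (S x)‖ * ‖x‖) := by gcongr; exact hS.norm_apply_sq_le x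
      _ = c ^ 2 * ‖S (S x)‖ * ‖x‖ := (mul_assoc _ _ _).symm
  exact le_of_mul_le_mul_right hsq (norm_pos_iff.mpr hx0)

end LinearMap.IsSymmetric

/-- Let `H` be a complex Hilbert space and `T : H → H` a bounded
self-adjoint operator which is non-negative, i.e. `⟨Tx, x⟩ ≥ 0` for all `x`.
If `φ ∈ H` and `a > 0` satisfy `‖φ‖ ≤ a·‖Tφ‖`, then for every `k` of the form
`k = 2^l`, `l = 0, 1, 2, ...`, one has `‖φ‖ ≤ a^k·‖T^k φ‖`. -/
theorem stmt_4 {H : Type*} [NormedAddCommGroup H] [InnerProductSpace ℂ H]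
    [CompleteSpace H] (T : H →L[ℂ] H) (hT : IsSelfAdjoint T)
    (φ : H) (a : ℝ)
    (h : ‖φ‖ ≤ a * ‖T φ‖) :
    ∀ l : ℕ, ‖φ‖ ≤ a ^ (2 ^ l) * ‖(T ^ (2 ^ l)) φ‖ := by
  intro l
  induction l with
  | zero => simpa using h
  | succ l ih =>
    have hS : (T ^ 2 ^ l : H →L[ℂ] H).toLinearMap.IsSymmetric := (hT.pow _).isSymmetric
    rw [pow_succ, pow_mul, pow_mul, sq (T ^ 2 ^ l)]
    exact hS.norm_le_sq_mul_norm_apply_apply ih
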